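/- arXiv:1505.03487 — 3 statements merged into one kernel-verified Lean document; each statement's English description precedes it below -/
import Mathlib

section
/- Let a commutative diagram of C*-algebras be given as in the setup (exact columns, with the first column maps being inclusions of closed two-sided ideals and the second column maps being the corresponding quotient maps, and exact middle row). Then the bottom row 0 → A₃ → B₃ → C₃ → 0 is a short exact sequence of C*-algebras if and only if both φ₂(A₁) = φ₂(A₂) ∩ B₁ and φ₂(A₂) + B₁ ⊇ ψ₂⁻¹(C₁) hold. -/
open Pointwise

/-- A subset of a C*-algebra (or normed ring) is a closed two-sided ideal. -/
def IsClosedTwoSidedIdeal {A : Type*} [NonUnitalNormedRing A] [NormedSpace ℂ A]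
    (I : Set A) : Prop :=
  IsClosed I ∧ (0 : A) ∈ I ∧ (∀ x ∈ I, ∀ y ∈ I, x + y ∈ I) ∧
    (∀ (c : ℂ), ∀ x ∈ I, c • x ∈ I) ∧
    (∀ a : A, ∀ x ∈ I, a * x ∈ I) ∧ (∀ a : A, ∀ x ∈ I, x * a ∈ I)

theorem stmt0
    {A₂ A₃ B₂ B₃ C₂ C₃ : Type*}
    [NonUnitalNormedRing A₂] [StarRing A₂] [CStarRing A₂] [CompleteSpace A₂]
    [NormedSpace ℂ A₂] [IsScalarTower ℂ A₂ A₂] [SMulCommClass ℂ A₂ A₂] [StarModule ℂ A₂]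
    [NonUnitalNormedRing A₃] [StarRing A₃] [CStarRing A₃] [CompleteSpace A₃]
    [NormedSpace ℂ A₃] [IsScalarTower ℂ A₃ A₃] [SMulCommClass ℂ A₃ A₃] [StarModule ℂ A₃]
    [NonUnitalNormedRing B₂] [StarRing B₂] [CStarRing B₂] [CompleteSpace B₂]
    [NormedSpace ℂ B₂] [IsScalarTower ℂ B₂ B₂] [SMulCommClass ℂ B₂ B₂] [StarModule ℂ B₂]
    [NonUnitalNormedRing B₃] [StarRing B₃] [CStarRing B₃] [CompleteSpace B₃]
    [NormedSpace ℂ B₃] [IsScalarTower ℂ B₃ B₃] [SMulCommClass ℂ B₃ B₃] [StarModule ℂ B₃]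
    [NonUnitalNormedRing C₂] [StarRing C₂] [CStarRing C₂] [CompleteSpace C₂]
    [NormedSpace ℂ C₂] [IsScalarTower ℂ C₂ C₂] [SMulCommClass ℂ C₂ C₂] [StarModule ℂ C₂]
    [NonUnitalNormedRing C₃] [StarRing C₃] [CStarRing C₃] [CompleteSpace C₃]
    [NormedSpace ℂ C₃] [IsScalarTower ℂ C₃ C₃] [SMulCommClass ℂ C₃ C₃] [StarModule ℂ C₃]
    -- the ideals forming the first row
    (A₁ : Set A₂) (B₁ : Set B₂) (C₁ : Set C₂)
    (hA₁ : IsClosedTwoSidedIdeal A₁) (hB₁ : IsClosedTwoSidedIdeal B₁)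
    (hC₁ : IsClosedTwoSidedIdeal C₁)
    -- the quotient maps (columns), surjective with the ideal as kernel
    (πA : A₂ →⋆ₙₐ[ℂ] A₃) (πB : B₂ →⋆ₙₐ[ℂ] B₃) (πC : C₂ →⋆ₙₐ[ℂ] C₃)
    (hπA : Function.Surjective πA) (hπB : Function.Surjective πB)
    (hπC : Function.Surjective πC)
    (hkerA : {a : A₂ | πA a = 0} = A₁) (hkerB : {b : B₂ | πB b = 0} = B₁)
    (hkerC : {c : C₂ | πC c = 0} = C₁)
    -- the middle row, a short exact sequence
    (φ₂ : A₂ →⋆ₙₐ[ℂ] B₂) (ψ₂ : B₂ →⋆ₙₐ[ℂ] C₂)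
    (hφ₂ : Function.Injective φ₂) (hψ₂ : Function.Surjective ψ₂)
    (hmid : Set.range φ₂ = {b : B₂ | ψ₂ b = 0})
    -- the first row maps are restrictions of the middle row maps
    (hφ₂A₁ : φ₂ '' A₁ ⊆ B₁) (hψ₂B₁ : ψ₂ '' B₁ ⊆ C₁)
    -- the bottom row, commuting with the columns
    (φ₃ : A₃ →⋆ₙₐ[ℂ] B₃) (ψ₃ : B₃ →⋆ₙₐ[ℂ] C₃)
    (hcomm₁ : ∀ a : A₂, φ₃ (πA a) = πB (φ₂ a))
    (hcomm₂ : ∀ b : B₂, ψ₃ (πB b) = πC (ψ₂ b)) :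
    (Function.Injective φ₃ ∧ Function.Surjective ψ₃ ∧
        Set.range φ₃ = {b : B₃ | ψ₃ b = 0}) ↔
      (φ₂ '' A₁ = Set.range φ₂ ∩ B₁ ∧ ψ₂ ⁻¹' C₁ ⊆ Set.range φ₂ + B₁) := by
  have kerA : ∀ a, πA a = 0 ↔ a ∈ A₁ := fun a => by rw [← hkerA]; rfl
  have kerB : ∀ b, πB b = 0 ↔ b ∈ B₁ := fun b => by rw [← hkerB]; rfl
  have kerC : ∀ c, πC c = 0 ↔ c ∈ C₁ := fun c => by rw [← hkerC]; rfl
  have midz : ∀ a, ψ₂ (φ₂ a) = 0 := fun a => by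
    have h : φ₂ a ∈ Set.range φ₂ := ⟨a, rfl⟩
    rw [hmid] at h; exact h
  constructor
  · rintro ⟨h1, _h2, h3⟩
    constructor
    · apply Set.Subset.antisymm
      · intro b hb
        exact ⟨(Set.image_subset_range φ₂ A₁) hb, hφ₂A₁ hb⟩
      · rintro b ⟨⟨a, rfl⟩, hb⟩
        refine ⟨a, ?_, rfl⟩
        rw [← kerA]
        apply h1
        rw [map_zero, hcomm₁]
        exact (kerB _).2 hb
    · intro b hb
      have h : ψ₃ (πB b) = 0 := by rw [hcomm₂]; exact (kerC _).2 hb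
      have h' : πB b ∈ Set.range φ₃ := by rw [h3]; exact h
      obtain ⟨a₃, ha₃⟩ := h'
      obtain ⟨a, rfl⟩ := hπA a₃
      rw [hcomm₁] at ha₃
      refine Set.mem_add.2 ⟨φ₂ a, ⟨a, rfl⟩, b - φ₂ a, ?_, by abel⟩
      rw [← kerB, map_sub, ha₃, sub_self]
  · rintro ⟨h1, h2⟩
    refine ⟨?_, ?_, ?_⟩
    · intro x y hxy
      obtain ⟨a, rfl⟩ := hπA x
      obtain ⟨a', rfl⟩ := hπA y
      have hm : φ₂ (a - a') ∈ Set.range φ₂ ∩ B₁ := by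
        refine ⟨⟨_, rfl⟩, ?_⟩
        rw [← kerB, ← hcomm₁, map_sub, map_sub, hxy, sub_self]
      rw [← h1] at hm
      obtain ⟨a'', ha'', heq⟩ := hm
      have hmem : a - a' ∈ A₁ := (hφ₂ heq) ▸ ha''
      have hz : πA (a - a') = 0 := (kerA _).2 hmem
      rw [map_sub, sub_eq_zero] at hz; exact hz
    · intro c₃
      obtain ⟨c, rfl⟩ := hπC c₃
      obtain ⟨b, rfl⟩ := hψ₂ c
      exact ⟨πB b, hcomm₂ b⟩
    · apply Set.Subset.antisymm
      · rintro _ ⟨a₃, rfl⟩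
        obtain ⟨a, rfl⟩ := hπA a₃
        show ψ₃ (φ₃ (πA a)) = 0
        rw [hcomm₁, hcomm₂, midz, map_zero]
      · intro b₃ hb₃
        obtain ⟨b, rfl⟩ := hπB b₃
        have hc : ψ₂ b ∈ C₁ := by
          rw [← kerC, ← hcomm₂]; exact hb₃
        obtain ⟨x, ⟨a, rfl⟩, y, hy, hxy⟩ := Set.mem_add.1 (h2 hc)
        refine ⟨πA a, ?_⟩
        rw [hcomm₁, ← hxy, map_add, (kerB y).2 hy, add_zero]
end

section
/- Let A be a C*-algebra, let I be a closed two-sided ideal of A, and let {J_s}_{s ∈ S} be a nonempty family of closed two-sided ideals of A. Then I ∩ clspan(⋃_{s∈S} J_s) = clspan(⋃_{s∈S} (I ∩ J_s)); that is, intersection with a fixed closed two-sided ideal distributes over the closed linear span of an arbitrary nonempty family of closed two-sided ideals. -/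
set_option linter.unusedSectionVars false

open CStarAlgebra Unitization Set

section aux

variable {A : Type*} [NonUnitalNormedRing A] [StarRing A] [CStarRing A] [CompleteSpace A]
    [NormedSpace ℂ A] [IsScalarTower ℂ A A] [SMulCommClass ℂ A A] [StarModule ℂ A]

noncomputable instance auxNUCSA : NonUnitalCStarAlgebra A := {}

/-- generic: a continuous linear map sending a generating set into a submodule sends the
closure of the span into the closure of the submodule. -/
lemma aux_map_closure_span {S : Type*} (J : S → Set A) (L : A →L[ℂ] A) (M : Submodule ℂ A)
    (h : ∀ s : S, ∀ j ∈ J s, L j ∈ M) :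
    ∀ y ∈ closure (Submodule.span ℂ (⋃ s : S, J s) : Set A), L y ∈ closure (M : Set A) := by
  intro y hy
  have hspan : Submodule.span ℂ (⋃ s : S, J s) ≤ M.comap (L : A →ₗ[ℂ] A) := by
    rw [Submodule.span_le]
    rintro z hz
    simp only [Set.mem_iUnion] at hz
    obtain ⟨s, hs⟩ := hz
    exact h s z hs
  have h1 : L y ∈ closure (L '' (Submodule.span ℂ (⋃ s : S, J s) : Set A)) :=
    image_closure_subset_closure_image L.continuous ⟨y, hy, rfl⟩
  refine closure_mono ?_ h1
  rintro - ⟨z, hz, rfl⟩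
  exact hspan hz

lemma aux_real {ε c : ℝ} (hε : 0 < ε) (hc : c = ε ^ 4) (t : ℝ) :
    |(1 - t * (t / (t ^ 2 + c))) * t * (1 - t * (t / (t ^ 2 + c)))| ≤ ε ^ 2 := by
  subst hc
  have hq : (0:ℝ) < t ^ 2 + ε ^ 4 := by positivity
  have h1 : (1 - t * (t / (t ^ 2 + ε ^ 4))) * t * (1 - t * (t / (t ^ 2 + ε ^ 4)))
      = (ε ^ 4) ^ 2 * t / (t ^ 2 + ε ^ 4) ^ 2 := by
    field_simp
    ring
  rw [h1, abs_div, abs_of_pos (by positivity : (0:ℝ) < (t ^ 2 + ε ^ 4) ^ 2),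
    div_le_iff₀ (by positivity)]
  have h2 : |(ε ^ 4) ^ 2 * t| = ε ^ 8 * |t| := by
    rw [abs_mul, abs_of_nonneg (by positivity : (0:ℝ) ≤ (ε ^ 4) ^ 2)]
    ring
  rw [h2]
  have h3 : 2 * |t| * ε ^ 2 ≤ t ^ 2 + ε ^ 4 := by
    nlinarith [sq_nonneg (|t| - ε ^ 2), sq_abs t]
  have h4 : (2 * |t| * ε ^ 2) * (t ^ 2 + ε ^ 4) ≤ (t ^ 2 + ε ^ 4) * (t ^ 2 + ε ^ 4) :=
    mul_le_mul_of_nonneg_right h3 hq.le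
  have h5 : (2 * |t| * ε ^ 2) * ε ^ 4 ≤ (2 * |t| * ε ^ 2) * (t ^ 2 + ε ^ 4) := by
    have h0 : (0:ℝ) ≤ 2 * |t| * ε ^ 2 := by positivity
    nlinarith [sq_nonneg t]
  have h6 : ε ^ 2 * ((2 * |t| * ε ^ 2) * (t ^ 2 + ε ^ 4))
      ≤ ε ^ 2 * ((t ^ 2 + ε ^ 4) * (t ^ 2 + ε ^ 4)) :=
    mul_le_mul_of_nonneg_left h4 (by positivity)
  have h7 : ε ^ 2 * ((2 * |t| * ε ^ 2) * ε ^ 4)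
      ≤ ε ^ 2 * ((2 * |t| * ε ^ 2) * (t ^ 2 + ε ^ 4)) :=
    mul_le_mul_of_nonneg_left h5 (by positivity)
  have h8 : (0:ℝ) ≤ |t| * ε ^ 8 := by positivity
  nlinarith [h6, h7, h8]

/-- the key approximation: if `a = star x * x` then `x` is approximated by `x * cfcₙ f a`. -/
lemma aux_approx (x : A) {ε : ℝ} (hε : 0 < ε) :
    ‖x - x * cfcₙ (fun t : ℝ => t * (t / (t ^ 2 + ε ^ 4))) (star x * x)‖ ≤ ε := by
  obtain ⟨c, hc⟩ : ∃ c : ℝ, c = ε ^ 4 := ⟨_, rfl⟩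
  have hc0 : 0 < c := by rw [hc]; positivity
  rw [← hc]
  set a : A := star x * x with ha'
  have ha : IsSelfAdjoint a := IsSelfAdjoint.star_mul_self x
  set f : ℝ → ℝ := fun t => t * (t / (t ^ 2 + c)) with hf
  have hf0 : f 0 = 0 := by simp [hf]
  have hfc : Continuous f := by
    apply Continuous.mul continuous_id
    exact Continuous.div continuous_id (by fun_prop) (fun t => by positivity)
  have hy' : (↑(cfcₙ f a) : Unitization ℂ A) = cfc f (a : Unitization ℂ A) :=
    Unitization.real_cfcₙ_eq_cfc_inr a f hf0
  rw [← Unitization.norm_inr (𝕜 := ℂ), Unitization.inr_sub, Unitization.inr_mul, hy']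
  set x' : Unitization ℂ A := (x : Unitization ℂ A) with hx'
  set a' : Unitization ℂ A := (a : Unitization ℂ A) with ha''
  have ha2 : IsSelfAdjoint a' := (isSelfAdjoint_inr (R := ℂ)).mpr ha
  have hxa : star x' * x' = a' := by
    rw [hx', ha'', ha', Unitization.inr_mul, Unitization.inr_star]
  set Y : Unitization ℂ A := cfc f a' with hY
  have hYsa : IsSelfAdjoint Y := cfc_predicate f a'
  set u : Unitization ℂ A := 1 - Y with hu
  have husa : IsSelfAdjoint u := by
    rw [hu]; exact (IsSelfAdjoint.one (R := Unitization ℂ A)).sub hYsa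
  have hz : x' - x' * Y = x' * u := by rw [hu, mul_sub, mul_one]
  rw [hz]
  -- C* identity
  have hnorm : ‖x' * u‖ * ‖x' * u‖ = ‖star (x' * u) * (x' * u)‖ :=
    (CStarRing.norm_star_mul_self).symm
  have hexp : star (x' * u) * (x' * u) = u * a' * u := by
    rw [star_mul, husa.star_eq, mul_assoc, ← mul_assoc (star x'), hxa, ← mul_assoc]
  -- cfc computation
  have hu' : u = cfc (fun t : ℝ => 1 - f t) a' := by
    rw [cfc_sub _ _ a' (by fun_prop) hfc.continuousOn, cfc_const_one ℝ a', hu, hY]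
  have hcfc : u * a' * u = cfc (fun t : ℝ => (1 - f t) * t * (1 - f t)) a' := by
    rw [hu']
    rw [cfc_mul _ _ a' (by fun_prop) (by fun_prop), cfc_mul _ _ a' (by fun_prop) (by fun_prop),
      cfc_id' ℝ a' ha2]
  have hbound : ‖u * a' * u‖ ≤ ε ^ 2 := by
    rw [hcfc]
    apply norm_cfc_le (by positivity)
    intro t _
    rw [Real.norm_eq_abs, hf]
    exact aux_real hε hc t
  have : ‖x' * u‖ * ‖x' * u‖ ≤ ε * ε := by
    rw [hnorm, hexp]
    calc ‖u * a' * u‖ ≤ ε ^ 2 := hbound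
    _ = ε * ε := by ring
  nlinarith [norm_nonneg (x' * u)]

end aux

theorem stmt3
    {A : Type*} [NonUnitalNormedRing A] [StarRing A] [CStarRing A] [CompleteSpace A]
    [NormedSpace ℂ A] [IsScalarTower ℂ A A] [SMulCommClass ℂ A A] [StarModule ℂ A]
    {S : Type*} [Nonempty S]
    (I : Set A) (J : S → Set A)
    (hI : IsClosedTwoSidedIdeal I) (hJ : ∀ s : S, IsClosedTwoSidedIdeal (J s)) :
    I ∩ closure (Submodule.span ℂ (⋃ s : S, J s) : Set A)
      = closure (Submodule.span ℂ (⋃ s : S, I ∩ J s) : Set A) := by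
  obtain ⟨hIc, hI0, hIadd, hIsmul, hIml, hImr⟩ := hI
  set K : Set A := closure (Submodule.span ℂ (⋃ s : S, J s) : Set A) with hK
  set T : Set A := closure (Submodule.span ℂ (⋃ s : S, I ∩ J s) : Set A) with hT
  apply Set.eq_of_subset_of_subset
  · -- hard direction
    rintro x ⟨hxI, hxK⟩
    have hTc : IsClosed T := isClosed_closure
    rw [← hTc.closure_eq]
    rw [Metric.mem_closure_iff]
    intro ε hε
    -- the approximating element
    set a : A := star x * x with ha
    have haK : a ∈ K := by
      have := aux_map_closure_span J (ContinuousLinearMap.mul ℂ A (star x))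
        (Submodule.span ℂ (⋃ s : S, J s)) ?_ x hxK
      · exact this
      · intro s j hj
        exact Submodule.subset_span (Set.mem_iUnion.mpr ⟨s, (hJ s).2.2.2.2.1 (star x) j hj⟩)
    set g : ℝ → ℝ := fun t => t / (t ^ 2 + (ε/2) ^ 4) with hg
    have hg0 : g 0 = 0 := by simp [hg]
    have hgc : Continuous g := Continuous.div continuous_id (by fun_prop) (fun t => by positivity)
    set f : ℝ → ℝ := fun t => t * g t with hf
    have ha' : IsSelfAdjoint a := IsSelfAdjoint.star_mul_self x
    set y : A := cfcₙ f a with hy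
    have hyad : y = a * cfcₙ g a := by
      rw [hy, hf, cfcₙ_mul _ _ a (by fun_prop) rfl (by fun_prop) hg0, cfcₙ_id' ℝ a ha']
    have hyK : y ∈ K := by
      rw [hyad]
      refine aux_map_closure_span J ((ContinuousLinearMap.mul ℂ A).flip (cfcₙ g a))
        (Submodule.span ℂ (⋃ s : S, J s)) ?_ a haK
      intro s j hj
      exact Submodule.subset_span (Set.mem_iUnion.mpr ⟨s, (hJ s).2.2.2.2.2 (cfcₙ g a) j hj⟩)
    have hxyT : x * y ∈ T := by
      refine aux_map_closure_span J (ContinuousLinearMap.mul ℂ A x)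
        (Submodule.span ℂ (⋃ s : S, I ∩ J s)) ?_ y hyK
      intro s j hj
      exact Submodule.subset_span
        (Set.mem_iUnion.mpr ⟨s, ⟨hImr j x hxI, (hJ s).2.2.2.2.1 x j hj⟩⟩)
    refine ⟨x * y, hxyT, ?_⟩
    rw [dist_eq_norm]
    calc ‖x - x * y‖ ≤ ε / 2 := by
          exact aux_approx x (by positivity : (0:ℝ) < ε / 2)
      _ < ε := by linarith
  · -- easy direction
    apply Set.subset_inter
    · have h1 : (Submodule.span ℂ (⋃ s : S, I ∩ J s) : Set A) ⊆ I := by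
        have : Submodule.span ℂ (⋃ s : S, I ∩ J s) ≤
            ({ carrier := I, add_mem' := fun ha hb => hIadd _ ha _ hb, zero_mem' := hI0,
               smul_mem' := fun c x hx => hIsmul c x hx } : Submodule ℂ A) := by
          rw [Submodule.span_le]
          exact Set.iUnion_subset fun s => Set.inter_subset_left
        exact this
      calc T ⊆ closure I := closure_mono h1
        _ = I := hIc.closure_eq
    · exact closure_mono (Submodule.span_mono (Set.iUnion_mono fun s => Set.inter_subset_right))
end

section
/- Let A be a C*-algebra and let I and J be closed two-sided ideals of A. Then the set of sums I + J = {x + y : x ∈ I, y ∈ J} is a closed two-sided ideal of A; in particular, the sum of two closed two-sided ideals of a C*-algebra is already norm-closed. -/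
open scoped NNReal
open Metric

namespace AddSubgroup

variable {E : Type*} [NormedAddCommGroup E] {I J : AddSubgroup E}

theorem isClosed_sup_of_infDist_inter_le [CompleteSpace E] [IsClosed (I : Set E)]
    [IsClosed (J : Set E)] (h : ∀ x ∈ I, ∀ y ∈ J, infDist x (I ∩ J : Set E) ≤ ‖x + y‖) :
    IsClosed ((I ⊔ J : AddSubgroup E) : Set E) := by
  let q : I ⧸ J.addSubgroupOf I →+ E ⧸ J := QuotientAddGroup.map _ J I.subtype fun _ ↦ id
  have hq : Isometry q := by
    refine AddMonoidHomClass.isometry_of_norm q fun z ↦ ?_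
    induction z using QuotientAddGroup.induction_on with | H x => ?_
    have hmk : ‖(x : I ⧸ J.addSubgroupOf I)‖ = infDist (x : E) (I ∩ J : Set E) := by
      rw [QuotientAddGroup.norm_mk, ← infDist_image isometry_subtype_coe, Set.inter_comm,
        ← coe_inf, ← addSubgroupOf_map_subtype, coe_map]
      rfl
    rw [show q x = ((x : E) : E ⧸ J) from rfl, QuotientAddGroup.norm_mk, hmk]
    refine le_antisymm (infDist_le_infDist_of_subset Set.inter_subset_right
      ⟨0, I.zero_mem, J.zero_mem⟩) ((le_infDist ⟨0, J.zero_mem⟩).2 fun y hy ↦ ?_)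
    simpa [dist_eq_norm, sub_eq_add_neg] using h x x.2 (-y) (J.neg_mem hy)
  have : CompleteSpace I := IsClosed.completeSpace_coe (s := (I : Set E))
  have hsup : ((I ⊔ J : AddSubgroup E) : Set E) = QuotientAddGroup.mk ⁻¹' Set.range q := by
    ext z
    refine mem_sup.trans ⟨?_, ?_⟩
    · rintro ⟨x, hx, y, hy, rfl⟩
      exact ⟨(⟨x, hx⟩ : I), QuotientAddGroup.eq.2 (by simpa using hy)⟩
    · rintro ⟨w, hw⟩
      induction w using QuotientAddGroup.induction_on with | H x => ?_
      exact ⟨x, x.2, -x + z, QuotientAddGroup.eq.1 hw, add_neg_cancel_left _ _⟩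
  rw [hsup]
  exact (hq.antilipschitz.isClosed_range hq.uniformContinuous).preimage continuous_quotient_mk'

end AddSubgroup

namespace NNReal

variable {t : ℝ≥0}

lemma continuous_inv_add_const (ht : 0 < t) : Continuous fun s : ℝ≥0 ↦ (s + t)⁻¹ :=
  (continuous_id.add continuous_const).inv₀ fun _ ↦ (ht.trans_le le_add_self).ne'

lemma continuous_div_add_const (ht : 0 < t) : Continuous fun s : ℝ≥0 ↦ t / (s + t) := by
  simp only [div_eq_mul_inv]
  exact continuous_const.mul (continuous_inv_add_const ht)

end NNReal

namespace CStarAlgebra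

open NNReal

variable {B : Type*} [CStarAlgebra B] [PartialOrder B] [StarOrderedRing B] {b : B} {t : ℝ≥0}

lemma cfc_div_add_const_add_cfc_inv_add_const_mul (hb : 0 ≤ b) (ht : 0 < t) :
    cfc (fun s : ℝ≥0 ↦ t / (s + t)) b + cfc (fun s : ℝ≥0 ↦ (s + t)⁻¹) b * b = 1 := by
  have hsum : (fun s : ℝ≥0 ↦ t / (s + t) + (s + t)⁻¹ * s) = fun _ ↦ 1 := funext fun s ↦ by
    have : s + t ≠ 0 := (ht.trans_le le_add_self).ne'
    field_simp
    ring
  have := continuous_inv_add_const ht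
  have := continuous_div_add_const ht
  rw [← cfc_const_one ℝ≥0 b, ← hsum,
    cfc_add (a := b) (fun s ↦ t / (s + t)) (fun s ↦ (s + t)⁻¹ * s),
    cfc_mul (fun s ↦ (s + t)⁻¹) (fun s ↦ s) b, cfc_id' ℝ≥0 b]

lemma nnnorm_cfc_div_add_const_le : ‖cfc (fun s : ℝ≥0 ↦ t / (s + t)) b‖₊ ≤ 1 :=
  nnnorm_cfc_nnreal_le fun _ _ ↦ div_le_one_of_le₀ le_add_self zero_le

lemma nnnorm_cfc_div_add_const_mul_mul_le (hb : 0 ≤ b) (ht : 0 < t) :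
    ‖cfc (fun s : ℝ≥0 ↦ t / (s + t)) b * b * cfc (fun s : ℝ≥0 ↦ t / (s + t)) b‖₊ ≤ t := by
  have := continuous_div_add_const ht
  have hprod : cfc (fun s : ℝ≥0 ↦ t / (s + t)) b * b * cfc (fun s : ℝ≥0 ↦ t / (s + t)) b =
      cfc (fun s ↦ t / (s + t) * s * (t / (s + t))) b := by
    rw [cfc_mul (fun s ↦ t / (s + t) * s) (fun s ↦ t / (s + t)) b,
      cfc_mul (fun s ↦ t / (s + t)) (fun s ↦ s) b, cfc_id' ℝ≥0 b]
  rw [hprod]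
  refine nnnorm_cfc_nnreal_le fun s _ ↦ ?_
  calc t / (s + t) * s * (t / (s + t)) = t / (s + t) * (s / (s + t)) * t := by ring
    _ ≤ 1 * 1 * t := by
      gcongr
      · exact div_le_one_of_le₀ le_add_self zero_le
      · exact div_le_one_of_le₀ le_self_add zero_le
    _ = t := by ring

lemma exists_nnnorm_one_sub_mul_star_mul_self_le (y : B) (ht : 0 < t) :
    ∃ w : B, ‖1 - w * (star y * y)‖₊ ≤ 1 ∧ ‖y * (1 - w * (star y * y))‖₊ ^ 2 ≤ t := by
  have hb : 0 ≤ star y * y := star_mul_self_nonneg y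
  set u := cfc (fun s : ℝ≥0 ↦ t / (s + t)) (star y * y)
  refine ⟨cfc (fun s : ℝ≥0 ↦ (s + t)⁻¹) (star y * y), ?_⟩
  rw [← eq_sub_of_add_eq (cfc_div_add_const_add_cfc_inv_add_const_mul hb ht)]
  refine ⟨nnnorm_cfc_div_add_const_le, ?_⟩
  have hu : star u = u := (IsSelfAdjoint.of_nonneg (cfc_predicate _ _)).star_eq
  calc ‖y * u‖₊ ^ 2 = ‖star (y * u) * (y * u)‖₊ := by rw [CStarRing.nnnorm_star_mul_self, sq]
    _ = ‖u * (star y * y) * u‖₊ := by rw [star_mul, hu]; noncomm_ring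
    _ ≤ t := nnnorm_cfc_div_add_const_mul_mul_le hb ht

end CStarAlgebra

namespace NonUnitalCStarAlgebra

open Unitization

variable {A : Type*} [NonUnitalCStarAlgebra A]

lemma exists_norm_sub_mul_mul_le (y : A) {ε : ℝ} (hε : 0 < ε) :
    ∃ a : A, ∀ x : A, ‖x - x * (a * y)‖ ≤ ‖x + y‖ + ε := by
  obtain ⟨w, hw, hwy⟩ := CStarAlgebra.exists_nnnorm_one_sub_mul_star_mul_self_le
    (y : Unitization ℂ A) (t := ⟨ε ^ 2, sq_nonneg ε⟩) (NNReal.coe_pos.1 (pow_pos hε 2))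
  set v : Unitization ℂ A := 1 - w * (star (y : Unitization ℂ A) * y)
  -- `w * y⋆` has zero scalar part
  obtain ⟨a, ha⟩ : ∃ a : A, (a : Unitization ℂ A) = w * star (y : Unitization ℂ A) :=
    CanLift.prf _ (by simp)
  have hv : ‖v‖ ≤ 1 := by exact_mod_cast hw
  have hyv : ‖(y : Unitization ℂ A) * v‖ ≤ ε := by
    refine (pow_le_pow_iff_left₀ (norm_nonneg _) hε.le two_ne_zero).1 ?_
    exact_mod_cast hwy
  refine ⟨a, fun x ↦ ?_⟩
  have hx : ((x - x * (a * y) : A) : Unitization ℂ A) = (x + y : A) * v - y * v := by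
    simp only [inr_sub, inr_mul, inr_add, v, ha]
    noncomm_ring
  calc ‖x - x * (a * y)‖ = ‖(x + y : A) * v - y * v‖ := by rw [← hx, norm_inr]
    _ ≤ ‖((x + y : A) : Unitization ℂ A)‖ * ‖v‖ + ‖(y : Unitization ℂ A) * v‖ :=
      (norm_sub_le _ _).trans (by gcongr; exact norm_mul_le _ _)
    _ ≤ ‖x + y‖ * 1 + ε := by rw [norm_inr]; gcongr
    _ = ‖x + y‖ + ε := by rw [mul_one]

lemma infDist_inter_le_norm_add {I J : Set A} (hI : ∀ a, ∀ x ∈ I, x * a ∈ I)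
    (hJ : ∀ a, ∀ y ∈ J, a * y ∈ J) :
    ∀ x ∈ I, ∀ y ∈ J, infDist x (I ∩ J) ≤ ‖x + y‖ := by
  intro x hx y hy
  refine le_of_forall_pos_le_add fun ε hε ↦ ?_
  obtain ⟨a, ha⟩ := exists_norm_sub_mul_mul_le y hε
  have hmem : x * (a * y) ∈ I ∩ J := ⟨hI _ x hx, mul_assoc x a y ▸ hJ (x * a) y hy⟩
  exact (infDist_le_dist_of_mem hmem).trans ((dist_eq_norm _ _).trans_le (ha x))

end NonUnitalCStarAlgebra

namespace IsClosedTwoSidedIdeal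

def toAddSubgroup {A : Type*} [NonUnitalNormedRing A] [NormedSpace ℂ A] {I : Set A}
    (hI : IsClosedTwoSidedIdeal I) : AddSubgroup A where
  carrier := I
  zero_mem' := hI.2.1
  add_mem' {x y} hx hy := hI.2.2.1 x hx y hy
  neg_mem' {x} hx := by simpa using hI.2.2.2.1 (-1) x hx

theorem isClosed_setOf_exists_add {A : Type*} [NonUnitalCStarAlgebra A] {I J : Set A}
    (hI : IsClosedTwoSidedIdeal I) (hJ : IsClosedTwoSidedIdeal J) :
    IsClosed {z : A | ∃ x ∈ I, ∃ y ∈ J, z = x + y} := by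
  have ⟨hIc, _, _, _, _, hIr⟩ := hI
  have ⟨hJc, _, _, _, hJl, _⟩ := hJ
  have : IsClosed (hI.toAddSubgroup : Set A) := hIc
  have : IsClosed (hJ.toAddSubgroup : Set A) := hJc
  have hsup : {z : A | ∃ x ∈ I, ∃ y ∈ J, z = x + y} =
      (hI.toAddSubgroup ⊔ hJ.toAddSubgroup : AddSubgroup A) := by
    ext z
    simp only [Set.mem_ofPred_eq, SetLike.mem_coe, AddSubgroup.mem_sup, eq_comm]
    rfl
  rw [hsup]
  exact AddSubgroup.isClosed_sup_of_infDist_inter_le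
    (NonUnitalCStarAlgebra.infDist_inter_le_norm_add hIr hJl)

end IsClosedTwoSidedIdeal

/-- The sum of two closed two-sided ideals of a C*-algebra is a closed two-sided
ideal; in particular, the set of sums is already norm-closed. -/
theorem stmt7
    {A : Type*} [NonUnitalNormedRing A] [StarRing A] [CStarRing A] [CompleteSpace A]
    [NormedSpace ℂ A] [IsScalarTower ℂ A A] [SMulCommClass ℂ A A] [StarModule ℂ A]
    (I J : Set A) (hI : IsClosedTwoSidedIdeal I) (hJ : IsClosedTwoSidedIdeal J) :
    IsClosedTwoSidedIdeal {z : A | ∃ x ∈ I, ∃ y ∈ J, z = x + y} := by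
  let : NonUnitalCStarAlgebra A := {}
  refine ⟨hI.isClosed_setOf_exists_add hJ, ?_⟩
  obtain ⟨-, hI0, hIadd, hIsmul, hIl, hIr⟩ := hI
  obtain ⟨-, hJ0, hJadd, hJsmul, hJl, hJr⟩ := hJ
  refine ⟨⟨0, hI0, 0, hJ0, (add_zero 0).symm⟩, ?_, ?_, ?_, ?_⟩
  · rintro _ ⟨x, hx, y, hy, rfl⟩ _ ⟨x', hx', y', hy', rfl⟩
    exact ⟨x + x', hIadd x hx x' hx', y + y', hJadd y hy y' hy', add_add_add_comm x y x' y'⟩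
  · rintro c _ ⟨x, hx, y, hy, rfl⟩
    exact ⟨c • x, hIsmul c x hx, c • y, hJsmul c y hy, smul_add c x y⟩
  · rintro a _ ⟨x, hx, y, hy, rfl⟩
    exact ⟨a * x, hIl a x hx, a * y, hJl a y hy, mul_add a x y⟩
  · rintro a _ ⟨x, hx, y, hy, rfl⟩
    exact ⟨x * a, hIr a x hx, y * a, hJr a y hy, add_mul x y a⟩
end
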